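/- arXiv:2211.10741 — 3 statements merged into one kernel-verified Lean document; each statement's English description precedes it below -/
import Mathlib

section
/- Let d and m be positive integers and f(x) = b_d x^d + ... + b_0 a polynomial with integer coefficients with b_d > 0. Let δ = gcd(b_0, ..., b_d, m). Then the number of residues n modulo m with f(n) ≡ 0 (mod m) is at most c · d · δ^{1/d} · m^{1 - 1/d}, where c > 0 is an absolute constant. Here one may assume the Konyagin bound: for polynomials whose coefficients together with m have gcd 1, the number of roots modulo m is at most c · d · m^{1-1/d}. -/
/-!
Write `δ = gcd(content f, m)`, `f = δ g` and `m = δ m'`, so that `gcd(content g, m') = 1`. Then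
`m ∣ f(n) ↔ m' ∣ g(n)`, a condition of period `m'` in `n`, so `ρ(f, m) = δ ρ(g, m')`, and the
coprime bound for `ρ(g, m')` gives `δ · c d (m/δ)^(1-1/d) = c d δ^(1/d) m^(1-1/d)`.
-/

open Finset Polynomial

/-- `ρ(f, m)`. -/
def Polynomial.rootCountMod (f : ℤ[X]) (m : ℕ) : ℕ :=
  ((Icc 1 m).filter (fun n : ℕ => (m : ℤ) ∣ f.eval (n : ℤ))).card

lemma Nat.count_mul_of_periodic {p : ℕ → Prop} [DecidablePred p] {a : ℕ}
    (hp : Function.Periodic p a) (k : ℕ) : Nat.count p (k * a) = k * Nat.count p a := by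
  induction k with
  | zero => simp
  | succ k ih =>
    have hshift : ∀ j, p (k * a + j) ↔ p j := fun j => by
      rw [add_comm]; exact Iff.of_eq (hp.nat_mul k j)
    simp only [Nat.succ_mul, Nat.count_add, ih, hshift]

lemma Nat.card_filter_Icc_one_eq_count_of_periodic {p : ℕ → Prop} [DecidablePred p] {a : ℕ}
    (hp : Function.Periodic p a) : #{n ∈ Icc 1 a | p n} = Nat.count p a := by
  rw [← Nat.filter_Ico_card_eq_of_periodic 1 a p hp]
  congr 2
  ext n
  simp only [mem_Icc, mem_Ico]
  omega

lemma Nat.card_filter_Icc_one_mul_of_periodic {p : ℕ → Prop} [DecidablePred p] {a : ℕ}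
    (hp : Function.Periodic p a) (k : ℕ) :
    #{n ∈ Icc 1 (k * a) | p n} = k * #{n ∈ Icc 1 a | p n} := by
  rw [card_filter_Icc_one_eq_count_of_periodic hp, card_filter_Icc_one_eq_count_of_periodic
    (by simpa using hp.nat_mul k), count_mul_of_periodic hp]

lemma Polynomial.periodic_dvd_eval (g : ℤ[X]) (m : ℕ) :
    Function.Periodic (fun n : ℕ => (m : ℤ) ∣ g.eval (n : ℤ)) m := by
  intro n
  have h := sub_dvd_eval_sub ((n + m : ℕ) : ℤ) n g
  rw [Nat.cast_add, add_sub_cancel_left] at h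
  exact propext (dvd_iff_dvd_of_dvd_sub h)

lemma Polynomial.rootCountMod_C_mul (g : ℤ[X]) {δ : ℕ} (hδ : δ ≠ 0) (m : ℕ) :
    rootCountMod (C (δ : ℤ) * g) (δ * m) = δ * rootCountMod g m := by
  unfold rootCountMod
  have hdvd : ∀ n : ℕ, (((δ * m : ℕ) : ℤ) ∣ (C (δ : ℤ) * g).eval (n : ℤ)) ↔ (m : ℤ) ∣ g.eval n :=
    fun n => by
      rw [eval_mul, eval_C, Nat.cast_mul]
      exact mul_dvd_mul_iff_left (by exact_mod_cast hδ)
  simp only [hdvd]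
  exact Nat.card_filter_Icc_one_mul_of_periodic (g.periodic_dvd_eval m) δ

lemma Polynomial.exists_eq_C_gcd_content_mul (f : ℤ[X]) {m : ℕ} (hm : 0 < m) :
    ∃ (g : ℤ[X]) (m' : ℕ), f = C (f.content.gcd m : ℤ) * g ∧ m = f.content.gcd m * m' ∧
      g.content.gcd m' = 1 := by
  set δ := f.content.gcd m
  have hδ : 0 < δ := Int.gcd_pos_of_ne_zero_right _ (by exact_mod_cast hm.ne')
  obtain ⟨g, hg⟩ : C (δ : ℤ) ∣ f := C_dvd_iff_dvd_coeff _ _ |>.mpr fun i =>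
    (Int.gcd_dvd_left _ _).trans (content_dvd_coeff i)
  obtain ⟨m', hm'⟩ : δ ∣ m := Int.ofNat_dvd.mp (Int.gcd_dvd_right _ _)
  refine ⟨g, m', hg, hm', Nat.eq_of_mul_eq_mul_left hδ ?_⟩
  calc δ * g.content.gcd m' = (f.content.gcd m) := by
        rw [hg, content_C_mul, Int.normalize_of_nonneg (Nat.cast_nonneg _), hm', Nat.cast_mul,
          Int.gcd_mul_left, Int.natAbs_natCast]
    _ = δ * 1 := (mul_one δ).symm

lemma Real.mul_rpow_one_sub {a b : ℝ} (ha : 0 ≤ a) (hb : 0 ≤ b) (e : ℝ) :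
    a * b ^ (1 - e) = a ^ e * (a * b) ^ (1 - e) := by
  rw [mul_rpow ha hb, ← mul_assoc, ← rpow_add' ha (by simp), add_sub_cancel, rpow_one]

theorem stmt_2
    (h : ∃ c : ℝ, 0 < c ∧ ∀ (d m : ℕ) (f : Polynomial ℤ), 1 ≤ d → 0 < m →
        f.natDegree = d → 0 < f.leadingCoeff → Int.gcd f.content (m : ℤ) = 1 →
        (((Finset.Icc 1 m).filter (fun n : ℕ => (m : ℤ) ∣ f.eval (n : ℤ))).card : ℝ)
          ≤ c * d * (m : ℝ) ^ (1 - 1 / (d : ℝ))) :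
    ∃ c : ℝ, 0 < c ∧ ∀ (d m : ℕ) (f : Polynomial ℤ), 1 ≤ d → 0 < m →
        f.natDegree = d → 0 < f.leadingCoeff →
        (((Finset.Icc 1 m).filter (fun n : ℕ => (m : ℤ) ∣ f.eval (n : ℤ))).card : ℝ)
          ≤ c * d * (Int.gcd f.content (m : ℤ) : ℝ) ^ ((1 : ℝ) / d)
              * (m : ℝ) ^ (1 - 1 / (d : ℝ)) := by
  obtain ⟨c, hc, hcoprime⟩ := h
  refine ⟨c, hc, fun d m f hd hm hdeg hlead => ?_⟩
  obtain ⟨g, m', hf, hm', hg⟩ := f.exists_eq_C_gcd_content_mul hm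
  set δ := f.content.gcd m
  have hδ : δ ≠ 0 := by rintro h0; simp [h0] at hm'; omega
  have hδ' : (δ : ℤ) ≠ 0 := by exact_mod_cast hδ
  have hgdeg : g.natDegree = d := by rwa [hf, natDegree_C_mul hδ'] at hdeg
  have hglead : 0 < g.leadingCoeff := by
    rw [hf, leadingCoeff_mul, leadingCoeff_C] at hlead
    exact pos_of_mul_pos_right hlead (Nat.cast_nonneg δ)
  have hbound := hcoprime d m' g hd (Nat.pos_of_ne_zero (by rintro rfl; omega)) hgdeg hglead hg
  change (rootCountMod f m : ℝ) ≤ _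
  calc (rootCountMod f m : ℝ) = δ * rootCountMod g m' := by
        rw [hf, hm', rootCountMod_C_mul g hδ, Nat.cast_mul]
    _ ≤ δ * (c * d * (m' : ℝ) ^ (1 - 1 / (d : ℝ))) := by gcongr; exact hbound
    _ = c * d * (δ : ℝ) ^ ((1 : ℝ) / d) * (m : ℝ) ^ (1 - 1 / (d : ℝ)) := by
        rw [hm', Nat.cast_mul, mul_left_comm, Real.mul_rpow_one_sub (by positivity) (by positivity)]
        ring
end

section
/- Let n ≥ 3 and s ≥ 1 be integers. Then the sum over prime divisors p of n of (ln p)^s / p is at most c · s^s · (ln ln n)^s, where c > 0 is an absolute constant. -/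
/-!
Split the prime factors of `n` at `T = (log n)^s`. For the small ones, Chebyshev's bound
`θ(N) ≤ N log 4` controls `∑ log p / p` over each range `(N/2, N]`, so halving gives the
Mertens-type estimate `∑_{p ≤ N} log p / p ≤ 4 log N`, hence
`∑_{p ≤ T} (log p)^s / p ≤ 4 (log T)^s = 4 (s log log n)^s`.
The large ones contribute at most `∑_{p ∣ n} (log p)^s / T ≤ (log n)^s / T = 1`, and this `1`
is absorbed into `(s log log n)^s` via `A^s ≤ e^A s^s` (from `A^s / s! ≤ e^A`) with
`A = 1 / log log n ≤ 1 / log log 3`.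
-/

open Finset Real Chebyshev

theorem sum_pow_succ_div_le {ι : Type*} (P : Finset ι) {f g : ι → ℝ} {M : ℝ}
    (hf₀ : ∀ i ∈ P, 0 ≤ f i) (hfM : ∀ i ∈ P, f i ≤ M) (hg : ∀ i ∈ P, 0 ≤ g i) (t : ℕ) :
    ∑ i ∈ P, f i ^ (t + 1) / g i ≤ M ^ t * ∑ i ∈ P, f i / g i := by
  rw [mul_sum]
  refine sum_le_sum fun i hi => ?_
  rw [pow_succ, mul_div_assoc]
  exact mul_le_mul_of_nonneg_right (pow_le_pow_left₀ (hf₀ i hi) (hfM i hi) t)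
    (div_nonneg (hf₀ i hi) (hg i hi))

theorem sum_primesLE_upper_half_log_div_le (N : ℕ) :
    ∑ p ∈ Nat.primesLE N with N < 2 * p, log p / p ≤ 2 * log 4 := by
  rcases N.eq_zero_or_pos with rfl | hN
  · simp [Nat.primesLE_zero, log_nonneg]
  have hN' : (0 : ℝ) < N := by exact_mod_cast hN
  calc ∑ p ∈ Nat.primesLE N with N < 2 * p, log p / p
      ≤ ∑ p ∈ Nat.primesLE N with N < 2 * p, log p * (2 / N) := by
        refine sum_le_sum fun p hp => ?_
        obtain ⟨hpN, hNp⟩ := mem_filter.mp hp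
        have hp0 : (0 : ℝ) < p := by exact_mod_cast (Nat.prime_of_mem_primesLE hpN).pos
        rw [div_eq_mul_one_div]
        refine mul_le_mul_of_nonneg_left ?_ (log_natCast_nonneg p)
        rw [div_le_div_iff₀ hp0 hN', one_mul]
        exact_mod_cast hNp.le
    _ ≤ ∑ p ∈ Nat.primesLE N, log p * (2 / N) :=
        sum_le_sum_of_subset_of_nonneg (filter_subset _ _) fun p _ _ =>
          mul_nonneg (log_natCast_nonneg p) (by positivity)
    _ = θ N * (2 / N) := by rw [theta_eq_sum_primesLE_log, sum_mul]
    _ ≤ log 4 * N * (2 / N) := by gcongr; exact theta_le_log4_mul_x N.cast_nonneg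
    _ = 2 * log 4 := by field_simp

theorem sum_primesLE_log_div_le_mul_natLog (N : ℕ) :
    ∑ p ∈ Nat.primesLE N, log p / p ≤ 2 * log 4 * Nat.log 2 N := by
  induction N using Nat.strong_induction_on with
  | _ N ih =>
  rcases lt_or_ge N 2 with hN | hN
  · interval_cases N <;> simp [Nat.primesLE_zero, Nat.primesLE_one]
  have hsplit : ∑ p ∈ Nat.primesLE N, log p / p = ∑ p ∈ Nat.primesLE (N / 2), log p / p
      + ∑ p ∈ Nat.primesLE N with N < 2 * p, log p / p := by
    rw [← sum_filter_add_sum_filter_not (Nat.primesLE N) (fun p => 2 * p ≤ N)]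
    congr 1
    · congr 1
      ext p
      simp only [mem_filter, Nat.mem_primesLE]
      grind
    · simp only [not_le]
  have hlog : Nat.log 2 N = Nat.log 2 (N / 2) + 1 := by
    rw [Nat.log_div_base]
    have := Nat.log_pos (b := 2) one_lt_two hN
    omega
  rw [hsplit, hlog]
  push_cast
  linarith [ih (N / 2) (by omega), sum_primesLE_upper_half_log_div_le N]

theorem sum_primesLE_log_div_le (N : ℕ) :
    ∑ p ∈ Nat.primesLE N, log p / p ≤ 4 * log N := by
  have hlog4 : log 4 = 2 * log 2 := by
    rw [show (4 : ℝ) = 2 ^ 2 by norm_num, log_pow]; norm_num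
  have hnatLog : Nat.log 2 N * log 2 ≤ log N := by
    rcases N.eq_zero_or_pos with rfl | hN
    · simp
    rw [← log_pow]
    exact log_le_log (by positivity) (by exact_mod_cast Nat.pow_log_le_self 2 hN.ne')
  calc ∑ p ∈ Nat.primesLE N, log p / p ≤ 2 * log 4 * Nat.log 2 N :=
        sum_primesLE_log_div_le_mul_natLog N
    _ = 4 * (Nat.log 2 N * log 2) := by rw [hlog4]; ring
    _ ≤ 4 * log N := by gcongr

theorem sum_primesLE_log_pow_div_le (N : ℕ) {s : ℕ} (hs : s ≠ 0) :
    ∑ p ∈ Nat.primesLE N, log p ^ s / p ≤ 4 * log N ^ s := by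
  obtain ⟨t, rfl⟩ := Nat.exists_eq_succ_of_ne_zero hs
  calc ∑ p ∈ Nat.primesLE N, log p ^ (t + 1) / p
      ≤ log N ^ t * ∑ p ∈ Nat.primesLE N, log p / p :=
        sum_pow_succ_div_le _ (fun p _ => log_natCast_nonneg p)
          (fun p hp => log_le_log (by exact_mod_cast (Nat.prime_of_mem_primesLE hp).pos)
            (by exact_mod_cast Nat.le_of_mem_primesLE hp))
          (fun p _ => p.cast_nonneg) t
    _ ≤ log N ^ t * (4 * log N) :=
        mul_le_mul_of_nonneg_left (sum_primesLE_log_div_le N) (pow_nonneg (log_natCast_nonneg N) t)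
    _ = 4 * log N ^ (t + 1) := by ring

theorem sum_primeFactors_log_le (n : ℕ) : ∑ p ∈ n.primeFactors, log p ≤ log n := by
  rcases n.eq_zero_or_pos with rfl | hn
  · simp
  rw [← log_prod fun p hp => by exact_mod_cast (Nat.prime_of_mem_primeFactors hp).ne_zero]
  exact log_le_log (prod_pos fun p hp => by exact_mod_cast (Nat.prime_of_mem_primeFactors hp).pos)
    (by rw [← Nat.cast_prod]; exact_mod_cast Nat.le_of_dvd hn (Nat.prod_primeFactors_dvd n))

theorem sum_primeFactors_filter_gt_log_pow_div_le (n : ℕ) {s : ℕ} (hs : s ≠ 0) {T : ℝ}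
    (hT : 0 < T) :
    ∑ p ∈ n.primeFactors with T < (p : ℕ), log p ^ s / p ≤ log n ^ s / T := by
  obtain ⟨t, rfl⟩ := Nat.exists_eq_succ_of_ne_zero hs
  have hpos : ∀ p ∈ n.primeFactors, (0 : ℝ) < p := fun p hp => by
    exact_mod_cast (Nat.prime_of_mem_primeFactors hp).pos
  calc ∑ p ∈ n.primeFactors with T < (p : ℕ), log p ^ (t + 1) / p
      ≤ log n ^ t * ∑ p ∈ n.primeFactors with T < (p : ℕ), log p / p :=
        sum_pow_succ_div_le _ (fun p _ => log_natCast_nonneg p)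
          (fun p hp => log_le_log (hpos p (mem_filter.mp hp).1)
            (Nat.cast_le.mpr (Nat.le_of_mem_primeFactors (mem_filter.mp hp).1)))
          (fun p _ => p.cast_nonneg) t
    _ ≤ log n ^ t * ∑ p ∈ n.primeFactors, log p / T := by
        refine mul_le_mul_of_nonneg_left ?_ (pow_nonneg (log_natCast_nonneg n) t)
        refine (sum_le_sum fun p hp => ?_).trans
            (sum_le_sum_of_subset_of_nonneg (filter_subset _ _) fun p _ _ =>
              div_nonneg (log_natCast_nonneg p) hT.le)
        exact div_le_div_of_nonneg_left (log_natCast_nonneg p) hT (mem_filter.mp hp).2.le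
    _ ≤ log n ^ t * (log n / T) := by
        rw [← sum_div]
        gcongr
        exact sum_primeFactors_log_le n
    _ = log n ^ (t + 1) / T := by ring

theorem pow_le_exp_mul_pow {A : ℝ} (hA : 0 ≤ A) (s : ℕ) : A ^ s ≤ exp A * s ^ s := by
  have hfact : (s.factorial : ℝ) ≤ s ^ s := by exact_mod_cast Nat.factorial_le_pow s
  calc A ^ s = A ^ s / s.factorial * s.factorial := by field_simp
    _ ≤ exp A * s ^ s := by
        gcongr
        exact pow_div_factorial_le_exp _ hA s

theorem one_le_exp_inv_mul_pow {L : ℝ} (hL : 0 < L) (s : ℕ) : 1 ≤ exp L⁻¹ * (s * L) ^ s := by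
  have h := mul_le_mul_of_nonneg_right (pow_le_exp_mul_pow (inv_nonneg.mpr hL.le) s)
    (pow_nonneg hL.le s)
  rwa [← mul_pow, inv_mul_cancel₀ hL.ne', one_pow, mul_assoc, ← mul_pow] at h

theorem stmt_4 : ∃ c : ℝ, 0 < c ∧ ∀ (n s : ℕ), 3 ≤ n → 1 ≤ s →
    ∑ p ∈ n.primeFactors, (Real.log p) ^ s / p
      ≤ c * (s : ℝ) ^ s * (Real.log (Real.log n)) ^ s := by
  set L₀ := log (log 3)
  have hlog3 : 1 < log 3 := by
    rw [lt_log_iff_exp_lt (by norm_num)]; linarith [exp_one_lt_d9]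
  have hL₀ : 0 < L₀ := log_pos hlog3
  refine ⟨4 + exp L₀⁻¹, by positivity, fun n s hn hs => ?_⟩
  have hs0 : s ≠ 0 := by omega
  have hlogn : log 3 ≤ log n := log_le_log (by norm_num) (by exact_mod_cast hn)
  have hL : L₀ ≤ log (log n) := log_le_log (by linarith) hlogn
  have hL_pos : 0 < log (log n) := hL₀.trans_le hL
  set T := log n ^ s
  have hT : 1 ≤ T := one_le_pow₀ (by linarith)
  have hsmall : ∑ p ∈ n.primeFactors with (p : ℕ) ≤ T, log p ^ s / p
      ≤ 4 * (s * log (log n)) ^ s := by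
    calc ∑ p ∈ n.primeFactors with (p : ℕ) ≤ T, log p ^ s / p
        ≤ ∑ p ∈ Nat.primesLE ⌊T⌋₊, log p ^ s / p := by
          refine sum_le_sum_of_subset_of_nonneg (fun p hp => ?_) fun p _ _ =>
            div_nonneg (pow_nonneg (log_natCast_nonneg p) s) p.cast_nonneg
          obtain ⟨hpn, hpT⟩ := mem_filter.mp hp
          exact Nat.mem_primesLE.mpr ⟨Nat.le_floor hpT, Nat.prime_of_mem_primeFactors hpn⟩
      _ ≤ 4 * log ⌊T⌋₊ ^ s := sum_primesLE_log_pow_div_le _ hs0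
      _ ≤ 4 * log T ^ s := by
          have hfloor : log ⌊T⌋₊ ≤ log T :=
            log_le_log (by exact_mod_cast Nat.floor_pos.mpr hT) (Nat.floor_le (by linarith))
          gcongr
      _ = 4 * (s * log (log n)) ^ s := by rw [log_pow]
  have hlarge : ∑ p ∈ n.primeFactors with T < (p : ℕ), log p ^ s / p ≤ 1 :=
    (sum_primeFactors_filter_gt_log_pow_div_le n hs0 (by linarith)).trans_eq
      (div_self (by positivity))
  have hone : 1 ≤ exp L₀⁻¹ * (s * log (log n)) ^ s :=
    (one_le_exp_inv_mul_pow hL_pos s).trans <|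
      mul_le_mul_of_nonneg_right (exp_le_exp.mpr (inv_anti₀ hL₀ hL)) (by positivity)
  rw [← sum_filter_add_sum_filter_not _ (fun p : ℕ => (p : ℝ) ≤ T)]
  simp only [not_le]
  calc _ ≤ 4 * (s * log (log n)) ^ s + exp L₀⁻¹ * (s * log (log n)) ^ s := by linarith
    _ = (4 + exp L₀⁻¹) * s ^ s * log (log n) ^ s := by ring
end

section
/- Let a, d, s be integers with a > 1, d ≥ 1, s ≥ 1. Then the sum over primes p with gcd(p, a) = 1 of (ln p)^s / (p · h_a(p)^{1/d}) converges and is bounded by a constant depending only on a, d, s, where h_a(p) denotes the multiplicative order of a modulo p. -/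
open Finset Real

private lemma aux_ord_pos {p b : ℕ} (hp : p.Prime) (hco : Nat.Coprime b p) :
    0 < orderOf ((b : ℕ) : ZMod p) := by
  haveI : Fact p.Prime := ⟨hp⟩
  have h : orderOf ((ZMod.unitOfCoprime b hco : (ZMod p)ˣ) : ZMod p)
      = orderOf (ZMod.unitOfCoprime b hco) := orderOf_units
  rw [ZMod.coe_unitOfCoprime] at h
  rw [h]
  exact orderOf_pos _

private lemma aux_dvd {p b : ℕ} (hp : p.Prime) (hb : 0 < b) :
    p ∣ b ^ orderOf ((b : ℕ) : ZMod p) - 1 := by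
  haveI : Fact p.Prime := ⟨hp⟩
  have h1 : (1 : ℕ) ≤ b ^ orderOf ((b : ℕ) : ZMod p) := Nat.one_le_pow _ _ hb
  rw [← ZMod.natCast_eq_zero_iff]
  push_cast [h1]
  rw [sub_eq_zero]
  exact pow_orderOf_eq_one _

private lemma key_log (s : ℕ) (hs : 1 ≤ s) {e x : ℝ} (he : 0 < e) (hx : 1 ≤ x) :
    (Real.log x) ^ s ≤ ((s : ℝ) / e) ^ s * x ^ e := by
  have hs0 : (0 : ℝ) < s := by exact_mod_cast hs
  have hes : 0 < e / s := div_pos he hs0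
  have h1 : Real.log x ≤ ((s : ℝ) / e) * x ^ (e / (s : ℝ)) := by
    have h2 := Real.log_le_rpow_div (by linarith : (0:ℝ) ≤ x) hes
    calc Real.log x ≤ x ^ (e / (s:ℝ)) / (e / (s:ℝ)) := h2
      _ = ((s:ℝ)/e) * x ^ (e/(s:ℝ)) := by
          rw [div_eq_mul_one_div, one_div_div, mul_comm]
  calc (Real.log x) ^ s ≤ (((s:ℝ)/e) * x ^ (e/(s:ℝ))) ^ s :=
        pow_le_pow_left₀ (Real.log_nonneg hx) h1 s
    _ = ((s:ℝ)/e) ^ s * (x ^ (e/(s:ℝ))) ^ s := mul_pow _ _ _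
    _ = ((s:ℝ)/e) ^ s * x ^ e := by
        rw [← Real.rpow_natCast (x ^ (e/(s:ℝ))) s, ← Real.rpow_mul (by linarith),
          div_mul_cancel₀ _ hs0.ne']

/-- Case `x ≤ h²` : term is at most `C₂ x^(-(1+e))`. -/
private lemma key1 (s : ℕ) (hs : 1 ≤ s) {e x h : ℝ} (he : 0 < e) (he4 : e ≤ 1/4)
    (hx : 1 ≤ x) (hh : 0 ≤ h) (hxh : x ≤ h ^ (2:ℝ)) :
    (Real.log x) ^ s / (x * h ^ (4*e)) ≤ ((s:ℝ)/e) ^ s * x ^ (-(1+e)) := by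
  have hx0 : (0:ℝ) < x := by linarith
  have hden : x ^ (2*e) ≤ h ^ (4*e) := by
    calc x ^ (2*e) ≤ (h ^ (2:ℝ)) ^ (2*e) :=
          Real.rpow_le_rpow hx0.le hxh (by positivity)
      _ = h ^ (4*e) := by rw [← Real.rpow_mul hh]; ring_nf
  have hnum := key_log s hs he hx
  have hxe : (0:ℝ) < x ^ (2*e) := Real.rpow_pos_of_pos hx0 _
  calc (Real.log x) ^ s / (x * h ^ (4*e))
      ≤ (((s:ℝ)/e) ^ s * x ^ e) / (x * x ^ (2*e)) := by
        apply div_le_div₀ (by positivity) hnum (by positivity)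
        exact mul_le_mul_of_nonneg_left hden hx0.le
    _ = ((s:ℝ)/e) ^ s * x ^ (-(1+e)) := by
        rw [mul_div_assoc]
        congr 1
        rw [show x * x ^ (2*e) = x ^ (1+2*e) by rw [Real.rpow_add hx0, Real.rpow_one],
          ← Real.rpow_sub hx0]
        ring_nf

/-- Case `h² ≤ x` : term is at most `C₂ h^(-(2+2e))`. -/
private lemma key2 (s : ℕ) (hs : 1 ≤ s) {e x h : ℝ} (he : 0 < e) (he4 : e ≤ 1/4)
    (hx : 1 ≤ x) (hh : 1 ≤ h) (hhx : h ^ (2:ℝ) ≤ x) :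
    (Real.log x) ^ s / (x * h ^ (4*e)) ≤ ((s:ℝ)/e) ^ s * h ^ (-(2+2*e)) := by
  have hx0 : (0:ℝ) < x := by linarith
  have hh0 : (0:ℝ) < h := by linarith
  have hnum := key_log s hs he hx
  have hhe : (0:ℝ) < h ^ (4*e) := Real.rpow_pos_of_pos hh0 _
  have hbase : x ^ (e-1) ≤ h ^ (2*(e-1)) := by
    calc x ^ (e-1) ≤ (h ^ (2:ℝ)) ^ (e-1) :=
          Real.rpow_le_rpow_of_nonpos (Real.rpow_pos_of_pos hh0 _) hhx (by linarith)
      _ = h ^ (2*(e-1)) := by rw [← Real.rpow_mul hh0.le]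
  calc (Real.log x) ^ s / (x * h ^ (4*e))
      ≤ (((s:ℝ)/e) ^ s * x ^ e) / (x * h ^ (4*e)) := by
        apply div_le_div₀ (by positivity) hnum (by positivity) le_rfl
    _ = ((s:ℝ)/e) ^ s * (x ^ (e-1) * h ^ (-(4*e))) := by
        rw [mul_div_assoc]
        congr 1
        rw [div_mul_eq_div_div,
          show x ^ e / x = x ^ (e-1) by
            nth_rewrite 2 [← Real.rpow_one x]
            rw [← Real.rpow_sub hx0],
          div_eq_mul_inv, ← Real.rpow_neg hh0.le]
    _ ≤ ((s:ℝ)/e) ^ s * (h ^ (2*(e-1)) * h ^ (-(4*e))) := by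
        apply mul_le_mul_of_nonneg_left _ (by positivity)
        exact mul_le_mul_of_nonneg_right hbase (by positivity)
    _ = ((s:ℝ)/e) ^ s * h ^ (-(2+2*e)) := by
        rw [← Real.rpow_add hh0]
        ring_nf

theorem stmt_7 (a d s : ℕ) (ha : 1 < a) (hd : 1 ≤ d) (hs : 1 ≤ s) :
    ∃ C : ℝ, 0 < C ∧ ∀ K : Finset ℕ, (∀ p ∈ K, p.Prime ∧ Nat.Coprime p a) →
      ∑ p ∈ K, (Real.log p) ^ s / ((p : ℝ) * (orderOf (a : ZMod p) : ℝ) ^ ((1 : ℝ) / d))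
        ≤ C := by
  classical
  have hd0 : (0:ℝ) < (d:ℝ) := by exact_mod_cast Nat.lt_of_lt_of_le Nat.zero_lt_one hd
  have hd1 : (1:ℝ) ≤ (d:ℝ) := by exact_mod_cast hd
  set e : ℝ := 1/(4*(d:ℝ)) with he_def
  have he : 0 < e := by positivity
  have he4 : e ≤ 1/4 := by
    rw [he_def]
    exact one_div_le_one_div_of_le (by norm_num) (by linarith)
  have h1d : (1:ℝ)/(d:ℝ) = 4*e := by rw [he_def]; field_simp
  have hs0 : (0:ℝ) < (s:ℝ) := by exact_mod_cast hs
  set C₂ : ℝ := ((s:ℝ)/e) ^ s with hC2_def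
  have hC2 : 0 < C₂ := by positivity
  have hsum1 : Summable (fun n : ℕ => (n:ℝ) ^ (-(1+e))) :=
    Real.summable_nat_rpow.mpr (by linarith)
  have hsum2 : Summable (fun n : ℕ => (n:ℝ) ^ (-(1+2*e))) :=
    Real.summable_nat_rpow.mpr (by linarith)
  have hB1 : 0 ≤ ∑' n : ℕ, (n:ℝ) ^ (-(1+e)) :=
    tsum_nonneg fun n => Real.rpow_nonneg (Nat.cast_nonneg n) _
  have hB2 : 0 ≤ ∑' n : ℕ, (n:ℝ) ^ (-(1+2*e)) :=
    tsum_nonneg fun n => Real.rpow_nonneg (Nat.cast_nonneg n) _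
  have hloga : 0 < Real.log a := Real.log_pos (by exact_mod_cast ha)
  have hlog2 : 0 < Real.log 2 := Real.log_pos one_lt_two
  refine ⟨C₂ * (∑' n : ℕ, (n:ℝ) ^ (-(1+e)))
      + (Real.log a / Real.log 2) * C₂ * (∑' n : ℕ, (n:ℝ) ^ (-(1+2*e))) + 1, ?_, ?_⟩
  · have h1 : 0 ≤ C₂ * (∑' n : ℕ, (n:ℝ) ^ (-(1+e))) := mul_nonneg hC2.le hB1
    have h2 : 0 ≤ (Real.log a / Real.log 2) * C₂ * (∑' n : ℕ, (n:ℝ) ^ (-(1+2*e))) :=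
      mul_nonneg (mul_nonneg (by positivity) hC2.le) hB2
    linarith
  intro K hK
  have hgpos : ∀ p ∈ K, 0 < orderOf ((a : ℕ) : ZMod p) := fun p hp =>
    aux_ord_pos (hK p hp).1 ((hK p hp).2.symm)
  rw [← Finset.sum_filter_add_sum_filter_not K
    (fun p => (orderOf ((a : ℕ) : ZMod p))^2 < p)
    (fun p => (Real.log p) ^ s / ((p : ℝ) * (orderOf ((a:ℕ) : ZMod p) : ℝ) ^ ((1 : ℝ) / (d:ℝ))))]
  have hbig : ∑ p ∈ K.filter (fun p => ¬ (orderOf ((a : ℕ) : ZMod p))^2 < p),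
      (Real.log p) ^ s / ((p : ℝ) * (orderOf ((a:ℕ) : ZMod p) : ℝ) ^ ((1 : ℝ) / (d:ℝ)))
      ≤ C₂ * ∑' n : ℕ, (n:ℝ) ^ (-(1+e)) := by
    have hle : ∀ p ∈ K.filter (fun p => ¬ (orderOf ((a : ℕ) : ZMod p))^2 < p),
        (Real.log p) ^ s / ((p : ℝ) * (orderOf ((a:ℕ) : ZMod p) : ℝ) ^ ((1 : ℝ) / (d:ℝ)))
          ≤ C₂ * (p:ℝ) ^ (-(1+e)) := by
      intro p hp
      rw [Finset.mem_filter] at hp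
      obtain ⟨hpK, hple⟩ := hp
      have hx : (1:ℝ) ≤ (p:ℝ) := by exact_mod_cast (hK p hpK).1.one_lt.le
      have hh0 : (0:ℝ) ≤ ((orderOf ((a:ℕ) : ZMod p) : ℕ) : ℝ) := Nat.cast_nonneg _
      have hxh : (p:ℝ) ≤ ((orderOf ((a:ℕ) : ZMod p) : ℕ) : ℝ) ^ (2:ℝ) := by
        have h1 : p ≤ (orderOf ((a:ℕ) : ZMod p))^2 := Nat.le_of_not_lt hple
        have h2 : (p:ℝ) ≤ ((orderOf ((a:ℕ) : ZMod p) : ℕ) : ℝ)^(2:ℕ) := by exact_mod_cast h1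
        rwa [show (((orderOf ((a:ℕ) : ZMod p) : ℕ)):ℝ)^(2:ℕ)
            = ((orderOf ((a:ℕ) : ZMod p) : ℕ) : ℝ)^(2:ℝ) by
          rw [← Real.rpow_natCast]; norm_num] at h2
      rw [h1d]
      exact key1 s hs he he4 hx hh0 hxh
    calc ∑ p ∈ K.filter (fun p => ¬ (orderOf ((a : ℕ) : ZMod p))^2 < p),
          (Real.log p) ^ s / ((p : ℝ) * (orderOf ((a:ℕ) : ZMod p) : ℝ) ^ ((1 : ℝ) / (d:ℝ)))
        ≤ ∑ p ∈ K.filter (fun p => ¬ (orderOf ((a : ℕ) : ZMod p))^2 < p),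
            C₂ * (p:ℝ) ^ (-(1+e)) := Finset.sum_le_sum hle
      _ = C₂ * ∑ p ∈ K.filter (fun p => ¬ (orderOf ((a : ℕ) : ZMod p))^2 < p),
            (p:ℝ) ^ (-(1+e)) := (Finset.mul_sum _ _ _).symm
      _ ≤ C₂ * ∑' n : ℕ, (n:ℝ) ^ (-(1+e)) := by
          apply mul_le_mul_of_nonneg_left _ hC2.le
          exact Summable.sum_le_tsum _ (fun n _ => Real.rpow_nonneg (Nat.cast_nonneg n) _) hsum1
  have hsmall : ∑ p ∈ K.filter (fun p => (orderOf ((a : ℕ) : ZMod p))^2 < p),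
      (Real.log p) ^ s / ((p : ℝ) * (orderOf ((a:ℕ) : ZMod p) : ℝ) ^ ((1 : ℝ) / (d:ℝ)))
      ≤ (Real.log a / Real.log 2) * C₂ * ∑' n : ℕ, (n:ℝ) ^ (-(1+2*e)) := by
    rw [← Finset.sum_fiberwise_of_maps_to
      (g := fun p => orderOf ((a : ℕ) : ZMod p))
      (t := (K.filter (fun p => (orderOf ((a : ℕ) : ZMod p))^2 < p)).image
        (fun p => orderOf ((a : ℕ) : ZMod p)))
      (fun p hp => Finset.mem_image_of_mem _ hp)]
    have hfiber : ∀ h ∈ (K.filter (fun p => (orderOf ((a : ℕ) : ZMod p))^2 < p)).image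
        (fun p => orderOf ((a : ℕ) : ZMod p)),
        ∑ p ∈ (K.filter (fun p => (orderOf ((a : ℕ) : ZMod p))^2 < p)).filter
            (fun p => orderOf ((a : ℕ) : ZMod p) = h),
          (Real.log p) ^ s / ((p : ℝ) * (orderOf ((a:ℕ) : ZMod p) : ℝ) ^ ((1 : ℝ) / (d:ℝ)))
          ≤ ((Real.log a / Real.log 2) * C₂) * (h:ℝ) ^ (-(1+2*e)) := by
      intro h hh
      obtain ⟨p₀, hp₀, hgp₀⟩ := Finset.mem_image.mp hh
      have hh1 : 1 ≤ h := hgp₀ ▸ hgpos p₀ (Finset.mem_filter.mp hp₀).1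
      have hh0 : (0:ℝ) < (h:ℝ) := by exact_mod_cast hh1
      have hhr1 : (1:ℝ) ≤ (h:ℝ) := by exact_mod_cast hh1
      have hmem : ∀ p ∈ (K.filter (fun p => (orderOf ((a : ℕ) : ZMod p))^2 < p)).filter
          (fun p => orderOf ((a : ℕ) : ZMod p) = h),
          p ∈ K ∧ h^2 < p ∧ orderOf ((a : ℕ) : ZMod p) = h := by
        intro p hp
        rw [Finset.mem_filter, Finset.mem_filter] at hp
        exact ⟨hp.1.1, hp.2 ▸ hp.1.2, hp.2⟩
      -- pointwise bound
      have hpt : ∀ p ∈ (K.filter (fun p => (orderOf ((a : ℕ) : ZMod p))^2 < p)).filter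
          (fun p => orderOf ((a : ℕ) : ZMod p) = h),
          (Real.log p) ^ s / ((p : ℝ) * (orderOf ((a:ℕ) : ZMod p) : ℝ) ^ ((1 : ℝ) / (d:ℝ)))
            ≤ C₂ * (h:ℝ) ^ (-(2+2*e)) := by
        intro p hp
        obtain ⟨hpK, hlt, hgph⟩ := hmem p hp
        have hx : (1:ℝ) ≤ (p:ℝ) := by exact_mod_cast (hK p hpK).1.one_lt.le
        have hhx : (h:ℝ) ^ (2:ℝ) ≤ (p:ℝ) := by
          have h2 : ((h:ℝ))^(2:ℕ) ≤ (p:ℝ) := by exact_mod_cast hlt.le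
          rwa [show ((h:ℝ))^(2:ℕ) = (h:ℝ)^(2:ℝ) by rw [← Real.rpow_natCast]; norm_num] at h2
        rw [h1d, hgph]
        exact key2 s hs he he4 hx hhr1 hhx
      -- cardinality bound
      have hdvd : ∏ p ∈ (K.filter (fun p => (orderOf ((a : ℕ) : ZMod p))^2 < p)).filter
          (fun p => orderOf ((a : ℕ) : ZMod p) = h), p ∣ a ^ h - 1 := by
        apply Finset.prod_primes_dvd
        · intro p hp
          exact ((hK p (hmem p hp).1).1).prime
        · intro p hp
          have := aux_dvd (hK p (hmem p hp).1).1 (show 0 < a by omega)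
          rwa [(hmem p hp).2.2] at this
      have hpos : 0 < a ^ h - 1 := by
        have h2 : 2 ≤ a ^ h := le_trans ha (Nat.le_self_pow (by omega) a)
        omega
      have h2card : 2 ^ ((K.filter (fun p => (orderOf ((a : ℕ) : ZMod p))^2 < p)).filter
          (fun p => orderOf ((a : ℕ) : ZMod p) = h)).card ≤ a ^ h := by
        calc 2 ^ _ ≤ ∏ p ∈ (K.filter (fun p => (orderOf ((a : ℕ) : ZMod p))^2 < p)).filter
              (fun p => orderOf ((a : ℕ) : ZMod p) = h), p :=
              Finset.pow_card_le_prod _ _ 2 (fun p hp => (hK p (hmem p hp).1).1.two_le)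
          _ ≤ a ^ h - 1 := Nat.le_of_dvd hpos hdvd
          _ ≤ a ^ h := Nat.sub_le _ _
      have hcard : ((((K.filter (fun p => (orderOf ((a : ℕ) : ZMod p))^2 < p)).filter
          (fun p => orderOf ((a : ℕ) : ZMod p) = h)).card : ℕ) : ℝ)
          ≤ (h:ℝ) * Real.log a / Real.log 2 := by
        rw [le_div_iff₀ hlog2]
        have hcast : ((2:ℝ)) ^ (((K.filter (fun p => (orderOf ((a : ℕ) : ZMod p))^2 < p)).filter
            (fun p => orderOf ((a : ℕ) : ZMod p) = h)).card) ≤ ((a:ℝ)) ^ h := by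
          exact_mod_cast h2card
        have hlog := Real.log_le_log (by positivity) hcast
        rwa [Real.log_pow, Real.log_pow] at hlog
      calc ∑ p ∈ (K.filter (fun p => (orderOf ((a : ℕ) : ZMod p))^2 < p)).filter
            (fun p => orderOf ((a : ℕ) : ZMod p) = h),
            (Real.log p) ^ s / ((p : ℝ) * (orderOf ((a:ℕ) : ZMod p) : ℝ) ^ ((1 : ℝ) / (d:ℝ)))
          ≤ ((K.filter (fun p => (orderOf ((a : ℕ) : ZMod p))^2 < p)).filter
            (fun p => orderOf ((a : ℕ) : ZMod p) = h)).card • (C₂ * (h:ℝ) ^ (-(2+2*e))) :=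
            Finset.sum_le_card_nsmul _ _ _ hpt
        _ = ((((K.filter (fun p => (orderOf ((a : ℕ) : ZMod p))^2 < p)).filter
            (fun p => orderOf ((a : ℕ) : ZMod p) = h)).card : ℕ) : ℝ)
              * (C₂ * (h:ℝ) ^ (-(2+2*e))) := nsmul_eq_mul _ _
        _ ≤ ((h:ℝ) * Real.log a / Real.log 2) * (C₂ * (h:ℝ) ^ (-(2+2*e))) :=
            mul_le_mul_of_nonneg_right hcard (by positivity)
        _ = ((Real.log a / Real.log 2) * C₂) * ((h:ℝ) ^ (1:ℝ) * (h:ℝ) ^ (-(2+2*e))) := by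
            rw [Real.rpow_one]; ring
        _ = ((Real.log a / Real.log 2) * C₂) * (h:ℝ) ^ (-(1+2*e)) := by
            rw [← Real.rpow_add hh0]; ring_nf
    calc ∑ h ∈ (K.filter (fun p => (orderOf ((a : ℕ) : ZMod p))^2 < p)).image
          (fun p => orderOf ((a : ℕ) : ZMod p)),
          ∑ p ∈ (K.filter (fun p => (orderOf ((a : ℕ) : ZMod p))^2 < p)).filter
            (fun p => orderOf ((a : ℕ) : ZMod p) = h),
          (Real.log p) ^ s / ((p : ℝ) * (orderOf ((a:ℕ) : ZMod p) : ℝ) ^ ((1 : ℝ) / (d:ℝ)))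
        ≤ ∑ h ∈ (K.filter (fun p => (orderOf ((a : ℕ) : ZMod p))^2 < p)).image
            (fun p => orderOf ((a : ℕ) : ZMod p)),
            ((Real.log a / Real.log 2) * C₂) * (h:ℝ) ^ (-(1+2*e)) := Finset.sum_le_sum hfiber
      _ = ((Real.log a / Real.log 2) * C₂) *
            ∑ h ∈ (K.filter (fun p => (orderOf ((a : ℕ) : ZMod p))^2 < p)).image
              (fun p => orderOf ((a : ℕ) : ZMod p)), (h:ℝ) ^ (-(1+2*e)) :=
            (Finset.mul_sum _ _ _).symm
      _ ≤ (Real.log a / Real.log 2) * C₂ * ∑' n : ℕ, (n:ℝ) ^ (-(1+2*e)) := by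
          apply mul_le_mul_of_nonneg_left _ (by positivity)
          exact Summable.sum_le_tsum _ (fun n _ => Real.rpow_nonneg (Nat.cast_nonneg n) _) hsum2
  linarith
end
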